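/- Buffer equivalence refines behavioral equivalence on permutations: if P and Q are permutations of {1, …, n} that are buffer equivalent, i.e. B_{P,i} = B_{Q,i} for all 1 ≤ i ≤ n, then they are behaviorally equivalent, i.e. ACK_{P,i} = ACK_{Q,i} for all 1 ≤ i ≤ n. -/

import Mathlib

/-!
Among the first `i` packets of a permutation, the values below `ACK A i` are exactly
`1, …, ACK A i - 1`, and the other `bufSize A i` values lie above it. As these are `i` distinct
values, `ACK A i + bufSize A i = i + 1`, so the buffer sizes determine the acknowledgements.
-/

/-- `ACK A i` is the acknowledgement after the first `i` packets of the 1-indexed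
sequence `A`: the least positive integer not among `A 1, …, A i`.
In particular `ACK A 0 = 1`. -/
noncomputable def ACK (A : ℕ → ℕ) (i : ℕ) : ℕ :=
  sInf {k : ℕ | 0 < k ∧ ∀ j, 1 ≤ j → j ≤ i → A j ≠ k}

/-- `bufSize A i` is the buffer size after the first `i` packets of the 1-indexed
sequence `A`: the number of distinct values among `A 1, …, A i` that are
`≥ ACK A i`. In particular `bufSize A 0 = 0`. -/
noncomputable def bufSize (A : ℕ → ℕ) (i : ℕ) : ℕ :=
  (((Finset.Icc 1 i).image A).filter (fun v => ACK A i ≤ v)).card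

/-- `A` (1-indexed) is a permutation of `{1, …, n}`: every integer in `{1, …, n}`
occurs exactly once among `A 1, …, A n`. -/
def IsPermSeq (n : ℕ) (A : ℕ → ℕ) : Prop :=
  Set.BijOn A (Set.Icc 1 n) (Set.Icc 1 n)

open Finset

section

variable (A : ℕ → ℕ) (i : ℕ)

lemma ACK_set_nonempty : {k : ℕ | 0 < k ∧ ∀ j, 1 ≤ j → j ≤ i → A j ≠ k}.Nonempty := by
  refine ⟨((Icc 1 i).image A).sup id + 1, Nat.succ_pos _, fun j hj1 hj2 hj => ?_⟩
  have : A j ≤ ((Icc 1 i).image A).sup id :=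
    le_sup (f := id) (mem_image_of_mem A (mem_Icc.mpr ⟨hj1, hj2⟩))
  omega

lemma ACK_pos : 0 < ACK A i :=
  (Nat.sInf_mem (ACK_set_nonempty A i)).1

lemma mem_image_of_lt_ACK {k : ℕ} (hk : 0 < k) (hkA : k < ACK A i) :
    k ∈ (Icc 1 i).image A := by
  by_contra h
  simp only [mem_image, mem_Icc, not_exists, not_and, and_imp] at h
  exact Nat.notMem_of_lt_sInf hkA ⟨hk, h⟩

lemma filter_lt_ACK_image (hpos : ∀ j ∈ Icc 1 i, 0 < A j) :
    ((Icc 1 i).image A).filter (· < ACK A i) = Icc 1 (ACK A i - 1) := by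
  have hA := ACK_pos A i
  ext k
  simp only [mem_filter, mem_Icc]
  constructor
  · rintro ⟨hk, hkA⟩
    obtain ⟨j, hj, rfl⟩ := mem_image.mp hk
    have := hpos j hj
    omega
  · rintro ⟨hk, hkA⟩
    exact ⟨mem_image_of_lt_ACK A i hk (by omega), by omega⟩

lemma ACK_add_bufSize (hinj : Set.InjOn A (Icc 1 i)) (hpos : ∀ j ∈ Icc 1 i, 0 < A j) :
    ACK A i + bufSize A i = i + 1 := by
  have hcard : ((Icc 1 i).image A).card = i := by
    rw [card_image_of_injOn hinj, Nat.card_Icc, Nat.add_sub_cancel]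
  have hsplit := card_filter_add_card_filter_not (s := (Icc 1 i).image A) (ACK A i ≤ ·)
  simp only [not_le] at hsplit
  rw [filter_lt_ACK_image A i hpos, Nat.card_Icc, hcard] at hsplit
  have := ACK_pos A i
  unfold bufSize
  omega

end

lemma IsPermSeq.ACK_add_bufSize {n : ℕ} {A : ℕ → ℕ} (hA : IsPermSeq n A) {i : ℕ} (hi : i ≤ n) :
    ACK A i + bufSize A i = i + 1 := by
  have hsub : ∀ {j}, j ∈ Icc 1 i → j ∈ Set.Icc 1 n := fun hj =>
    ⟨(mem_Icc.mp hj).1, (mem_Icc.mp hj).2.trans hi⟩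
  exact _root_.ACK_add_bufSize A i (hA.injOn.mono fun _ hj => hsub hj)
    fun _ hj => (hA.mapsTo (hsub hj)).1

/-- Buffer equivalence refines behavioral equivalence on permutations: if `P` and
`Q` are permutations of `{1, …, n}` with identical buffer sequences, then they
have identical acknowledgement sequences. -/
theorem buffer_equiv_refines_behavioral (n : ℕ) (P Q : ℕ → ℕ)
    (hP : IsPermSeq n P) (hQ : IsPermSeq n Q)
    (hbuf : ∀ i, 1 ≤ i → i ≤ n → bufSize P i = bufSize Q i) :
    ∀ i, 1 ≤ i → i ≤ n → ACK P i = ACK Q i := by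
  intro i hi1 hin
  have hPi := hP.ACK_add_bufSize hin
  have hQi := hQ.ACK_add_bufSize hin
  rw [hbuf i hi1 hin] at hPi
  omega
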